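/- The number of Hermite histories of length 2n (Dyck paths of length 2n with each down step labeled by an integer between 1 and the height of that step) is (2n−1)!! = 1·3·5···(2n−1). -/

import Mathlib

open Finset

/-- Steps of a Motzkin path: up, level, down. -/
inductive Step | U | L | D
deriving DecidableEq

instance : Fintype Step :=
  ⟨{Step.U, Step.L, Step.D}, fun x => by cases x <;> simp⟩

/-- `μ` is a Motzkin path: every prefix has at least as many `U`'s as `D`'s, and the
total numbers of `U`'s and `D`'s agree. -/
def IsMotzkin {n : ℕ} (μ : Fin n → Step) : Prop :=
  (∀ k : Fin n, (Finset.univ.filter (fun j => j ≤ k ∧ μ j = Step.D)).card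
      ≤ (Finset.univ.filter (fun j => j ≤ k ∧ μ j = Step.U)).card)
  ∧ (Finset.univ.filter (fun j => μ j = Step.U)).card
    = (Finset.univ.filter (fun j => μ j = Step.D)).card

/-- The height of the `i`-th step of `μ`: the larger of the two `y`-coordinates of
the step, i.e. `#{j ≤ i : μ j = U} − #{j < i : μ j = D}`. -/
def height {n : ℕ} (μ : Fin n → Step) (i : Fin n) : ℕ :=
  (Finset.univ.filter (fun j => j ≤ i ∧ μ j = Step.U)).card
    - (Finset.univ.filter (fun j => j < i ∧ μ j = Step.D)).card

/-- Biane's word of an involution: `U` if `i < σ i`, `L` if `i = σ i`, `D` if `i > σ i`. -/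
def bpath {n : ℕ} (σ : Equiv.Perm (Fin n)) (i : Fin n) : Step :=
  if i < σ i then Step.U else if σ i = i then Step.L else Step.D

/-- Biane's label of step `i`: `|{j ≥ i : σ j ≤ σ i}|`. -/
def blabel {n : ℕ} (σ : Equiv.Perm (Fin n)) (i : Fin n) : ℕ :=
  (Finset.univ.filter (fun j => i ≤ j ∧ σ j ≤ σ i)).card

open scoped Classical

/-- `μ` is a Dyck path: a Motzkin path with no level steps. -/
def IsDyck {n : ℕ} (μ : Fin n → Step) : Prop :=
  IsMotzkin μ ∧ ∀ i, μ i ≠ Step.L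

/-!
Deleting the first step of a Hermite history whose path starts at height `h` leaves a history
starting at height `h + 1` (after an up step, labelled `0`) or `h - 1` (after a down step, with one
of `h` labels). So the number `H(m, h)` of such histories of length `m` satisfies
`H(m + 1, h) = H(m, h + 1) + h H(m, h - 1)` with `H(0, h) = [h = 0]`, which is solved by
`H(2t + h, h) (2t)‼ = (2t + h)!`. At `h = 0` this reads `H(2n, 0) = (2n)! / (2n)‼ = (2n - 1)‼`.
-/

open scoped Nat

lemma Fin.card_filter_val_mem {N : ℕ} {s : Finset ℕ} (hs : s ⊆ range N) :
    #{a : Fin N | (a : ℕ) ∈ s} = #s := by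
  rw [← card_map Fin.valEmbedding]
  congr 1
  ext x
  simp only [mem_map, mem_filter, mem_univ, true_and, Fin.valEmbedding_apply]
  exact ⟨by rintro ⟨a, ha, rfl⟩; exact ha, fun hx => ⟨⟨x, mem_range.mp (hs hx)⟩, hx, rfl⟩⟩

lemma sum_card_filter_const_and {α β : Type*} [Fintype α] [Fintype β] (p : α → Prop)
    (q : β → Prop) [DecidablePred p] [DecidablePred q] :
    ∑ a, #{b | p a ∧ q b} = #{a | p a} * #{b | q b} := by
  rw [card_filter, sum_mul]
  refine sum_congr rfl fun a _ => ?_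
  by_cases ha : p a <;> simp [ha]

lemma prod_range_odd_mul_doubleFactorial (n : ℕ) :
    (∏ k ∈ range n, (2 * k + 1)) * (2 * n)‼ = (2 * n)! := by
  induction n with
  | zero => rfl
  | succ n ih =>
    rw [prod_range_succ, show 2 * (n + 1) = 2 * n + 2 by ring, Nat.doubleFactorial_add_two,
      Nat.factorial_succ, Nat.factorial_succ, ← ih]
    ring

lemma Step.univ_eq : (univ : Finset Step) = {Step.U, Step.L, Step.D} := rfl

/-- A Hermite history whose path starts at height `h` (and ends at height `0`). -/
def IsHistoryFrom {N m : ℕ} (h : ℕ) (μ : Fin m → Step) (l : Fin m → Fin N) : Prop :=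
  (∀ k, #{j | j ≤ k ∧ μ j = Step.D} ≤ h + #{j | j ≤ k ∧ μ j = Step.U})
  ∧ h + #{j | μ j = Step.U} = #{j | μ j = Step.D}
  ∧ (∀ i, μ i ≠ Step.L)
  ∧ (∀ i, μ i = Step.D → 1 ≤ (l i : ℕ) ∧
      (l i : ℕ) ≤ h + #{j | j ≤ i ∧ μ j = Step.U} - #{j | j < i ∧ μ j = Step.D})
  ∧ (∀ i, μ i ≠ Step.D → (l i : ℕ) = 0)

lemma isHistoryFrom_zero_iff {N m : ℕ} {μ : Fin m → Step} {l : Fin m → Fin N} :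
    IsHistoryFrom 0 μ l ↔ IsDyck μ ∧ (∀ i, μ i = Step.D → 1 ≤ (l i : ℕ) ∧ (l i : ℕ) ≤ height μ i)
      ∧ (∀ i, μ i ≠ Step.D → (l i : ℕ) = 0) := by
  simp only [IsHistoryFrom, IsDyck, IsMotzkin, height, zero_add, and_assoc]

section Cons

variable {N m h : ℕ} {μ : Fin m → Step} {l : Fin m → Fin N} {a : Fin N}

lemma isHistoryFrom_cons_U :
    IsHistoryFrom h (Fin.cons Step.U μ) (Fin.cons a l) ↔
      (a : ℕ) = 0 ∧ IsHistoryFrom (h + 1) μ l := by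
  simp [IsHistoryFrom, Fin.forall_fin_succ, Fin.card_filter_univ_succ', Fin.succ_le_succ_iff,
    Fin.succ_lt_succ_iff, add_assoc]
  tauto

lemma not_isHistoryFrom_cons_L : ¬IsHistoryFrom h (Fin.cons Step.L μ) (Fin.cons a l) :=
  fun hist => hist.2.2.1 0 rfl

lemma isHistoryFrom_cons_D :
    IsHistoryFrom h (Fin.cons Step.D μ) (Fin.cons a l) ↔
      (1 ≤ (a : ℕ) ∧ (a : ℕ) ≤ h) ∧ IsHistoryFrom (h - 1) μ l := by
  cases h with
  | zero =>
    refine iff_of_false (fun hist => ?_) (by omega)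
    simpa [Fin.card_filter_univ_succ'] using hist.1 0
  | succ h =>
    simp [IsHistoryFrom, Fin.forall_fin_succ, Fin.card_filter_univ_succ', Fin.succ_le_succ_iff,
      Fin.succ_lt_succ_iff, add_assoc, add_comm h 1, Nat.add_sub_add_left]
    tauto

end Cons

noncomputable def historyCount (N m h : ℕ) : ℕ :=
  #{p : (Fin m → Step) × (Fin m → Fin N) | IsHistoryFrom h p.1 p.2}

lemma historyCount_zero_zero (N : ℕ) : historyCount N 0 0 = 1 := by
  simp [historyCount, IsHistoryFrom]

lemma historyCount_eq_zero_of_lt {N m h : ℕ} (hm : m < h) : historyCount N m h = 0 := by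
  refine card_eq_zero.mpr (filter_eq_empty_iff.mpr fun p _ hist => ?_)
  have downs_le := card_filter_le univ (fun j => p.1 j = Step.D)
  simp only [card_univ, Fintype.card_fin] at downs_le
  have := hist.2.1
  omega

lemma historyCount_succ {N m h : ℕ} (hh : h < N) :
    historyCount N (m + 1) h = historyCount N m (h + 1) + h * historyCount N m (h - 1) := by
  let splitFirst : (Step × Fin N) × ((Fin m → Step) × (Fin m → Fin N)) ≃
      (Fin (m + 1) → Step) × (Fin (m + 1) → Fin N) :=
    (Equiv.prodProdProdComm _ _ _ _).trans
      ((Fin.consEquiv fun _ => Step).prodCongr (Fin.consEquiv fun _ => Fin N))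
  have labels_U : #{a : Fin N | (a : ℕ) = 0} = 1 := by
    simpa using Fin.card_filter_val_mem (s := {0}) (by simpa using h.zero_le.trans_lt hh)
  have labels_D : #{a : Fin N | 1 ≤ (a : ℕ) ∧ (a : ℕ) ≤ h} = h := by
    simpa using Fin.card_filter_val_mem (s := Icc 1 h) fun x hx => by simp at hx ⊢; omega
  rw [historyCount, card_filter, ← splitFirst.sum_comp, Fintype.sum_prod_type,
    Fintype.sum_prod_type]
  simp [Step.univ_eq, splitFirst, Fin.consEquiv, isHistoryFrom_cons_U, not_isHistoryFrom_cons_L,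
    isHistoryFrom_cons_D, sum_card_filter_const_and, labels_U, labels_D, historyCount]

lemma historyCount_mul_doubleFactorial {N m t h : ℕ} (hm : m = 2 * t + h) (hN : m + h < N) :
    historyCount N m h * (2 * t)‼ = m ! := by
  induction m generalizing t h with
  | zero =>
    obtain ⟨rfl, rfl⟩ : t = 0 ∧ h = 0 := by omega
    simp [historyCount_zero_zero]
  | succ m ih =>
    have up : historyCount N m (h + 1) * (2 * t)‼ = 2 * t * m ! := by
      cases t with
      | zero => simp [historyCount_eq_zero_of_lt (show m < h + 1 by omega)]
      | succ t =>
        rw [show 2 * (t + 1) = 2 * t + 2 by ring, Nat.doubleFactorial_add_two,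
          ← ih (t := t) (h := h + 1) (by omega) (by omega)]
        ring
    have down : h * historyCount N m (h - 1) * (2 * t)‼ = h * m ! := by
      cases h with
      | zero => simp
      | succ h => rw [mul_assoc, Nat.add_sub_cancel, ih (by omega) (by omega)]
    rw [historyCount_succ (by omega), add_mul, up, down, Nat.factorial_succ, hm]
    ring

/-- The number of Hermite histories of length `2n` — Dyck paths of length `2n` with
each down step labeled by an integer between `1` and the height of that step (and,
as a normalization, label `0` on up steps) — is `(2n−1)!! = 1·3·5⋯(2n−1)`. -/
theorem card_hermite_histories (n : ℕ) :
    (Finset.univ.filter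
      (fun p : (Fin (2 * n) → Step) × (Fin (2 * n) → Fin (2 * n + 1)) =>
        IsDyck p.1
        ∧ (∀ i, p.1 i = Step.D → 1 ≤ (p.2 i : ℕ) ∧ (p.2 i : ℕ) ≤ height p.1 i)
        ∧ (∀ i, p.1 i ≠ Step.D → (p.2 i : ℕ) = 0))).card
    = ∏ k ∈ Finset.range n, (2 * k + 1) := by
  have count : historyCount (2 * n + 1) (2 * n) 0 * (2 * n)‼ = (2 * n)! :=
    historyCount_mul_doubleFactorial (t := n) rfl (by omega)
  rw [← prod_range_odd_mul_doubleFactorial, historyCount] at count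
  simp only [isHistoryFrom_zero_iff] at count
  exact Nat.eq_of_mul_eq_mul_right (Nat.doubleFactorial_pos _) count
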